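/- arXiv:math/0401396 — 3 statements merged into one kernel-verified Lean document; each statement's English description precedes it below -/
import Mathlib

section
/- Let s ∈ ℂ with s ≠ 0 and let f = x³y³ + s·x·y + x ∈ ℂ[x,y] (the polynomial (xy)³ + s·xy + x of the paper's Example 8.1). Then the total Milnor number of f equals 1, i.e. dim_ℂ ℂ[x,y]/(∂f/∂x, ∂f/∂y) = dim_ℂ ℂ[x,y]/(3x²y³ + s·y + 1, 3x³y² + s·x) = 1. -/
/-!
The Jacobian ideal of `f = (xy)³ + s·xy + x` is the maximal ideal of the single point
`(0, -1/s)`. Indeed `x = x·∂ₓf - y·∂ᵧf` lies in it, and modulo `x` the generator `∂ₓf`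
reduces to `s·y + 1`; conversely both partials vanish at `(0, -1/s)`. The quotient by the
ideal of a point is the ground field, of dimension one.
-/

open MvPolynomial

noncomputable section

/-- The polynomial f = (xy)³ + s·xy + x of Example 8.1, as an element of ℂ[x,y]
    (variables: X 0 = x, X 1 = y). -/
def f₈₁ (s : ℂ) : MvPolynomial (Fin 2) ℂ :=
  X 0 ^ 3 * X 1 ^ 3 + C s * (X 0 * X 1) + X 0

namespace MvPolynomial

theorem mkₐ_eq_ofId_comp_aeval {R σ : Type*} [CommRing R] {I : Ideal (MvPolynomial σ R)}
    (x : σ → R) (hx : ∀ i, X i - C (x i) ∈ I) :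
    Ideal.Quotient.mkₐ R I = (Algebra.ofId R (MvPolynomial σ R ⧸ I)).comp (aeval x) :=
  algHom_ext fun i => Ideal.Quotient.eq.2 (by simpa using hx i)

theorem finrank_quotient_eq_one_of_X_sub_C_mem {K σ : Type*} [Field K]
    {I : Ideal (MvPolynomial σ K)} (x : σ → K) (hx : ∀ i, X i - C (x i) ∈ I)
    (hI : I ≤ RingHom.ker (aeval x)) :
    Module.finrank K (MvPolynomial σ K ⧸ I) = 1 := by
  have hne : I ≠ ⊤ := fun htop => by
    simpa using hI (htop ▸ Submodule.mem_top : (1 : MvPolynomial σ K) ∈ I)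
  have : Nontrivial (MvPolynomial σ K ⧸ I) := Ideal.Quotient.nontrivial_iff.mpr hne
  have hsurj : Function.Surjective (Algebra.ofId K (MvPolynomial σ K ⧸ I)) := by
    intro q
    obtain ⟨p, rfl⟩ := Ideal.Quotient.mk_surjective q
    exact ⟨aeval x p, (AlgHom.congr_fun (mkₐ_eq_ofId_comp_aeval x hx) p).symm⟩
  let e := AlgEquiv.ofBijective _ ⟨(Algebra.ofId K _).toRingHom.injective, hsurj⟩
  rw [← e.toLinearEquiv.finrank_eq, Module.finrank_self]

end MvPolynomial

theorem pderiv_zero_f₈₁ (s : ℂ) :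
    pderiv 0 (f₈₁ s) = 3 * X 0 ^ 2 * X 1 ^ 3 + C s * X 1 + 1 := by
  simp [f₈₁, pderiv_X]; ring

theorem pderiv_one_f₈₁ (s : ℂ) : pderiv 1 (f₈₁ s) = 3 * X 0 ^ 3 * X 1 ^ 2 + C s * X 0 := by
  simp [f₈₁, pderiv_X]; ring

theorem X_zero_mem_jacobian_f₈₁ (s : ℂ) :
    X 0 ∈ Ideal.span {pderiv 0 (f₈₁ s), pderiv 1 (f₈₁ s)} :=
  Ideal.mem_span_pair.2 ⟨X 0, -X 1, by rw [pderiv_zero_f₈₁, pderiv_one_f₈₁]; ring⟩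

theorem X_one_add_inv_mem_jacobian_f₈₁ {s : ℂ} (hs : s ≠ 0) :
    X 1 + C s⁻¹ ∈ Ideal.span {pderiv 0 (f₈₁ s), pderiv 1 (f₈₁ s)} := by
  have hinv : (C s⁻¹ * C s : MvPolynomial (Fin 2) ℂ) = 1 := by
    rw [← C_mul, inv_mul_cancel₀ hs, C_1]
  refine Ideal.mem_span_pair.2
    ⟨C s⁻¹ * (1 - 3 * X 0 ^ 2 * X 1 ^ 3), C s⁻¹ * (3 * X 0 * X 1 ^ 4), ?_⟩
  rw [pderiv_zero_f₈₁, pderiv_one_f₈₁]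
  linear_combination X 1 * hinv

/-- for s ≠ 0, the total Milnor number of f = (xy)³ + s·xy + x equals 1,
    i.e. dim_ℂ ℂ[x,y]/(∂f/∂x, ∂f/∂y) = 1. -/
theorem total_milnor_number_example81 (s : ℂ) (hs : s ≠ 0) :
    Module.finrank ℂ
      (MvPolynomial (Fin 2) ℂ ⧸
        Ideal.span {pderiv 0 (f₈₁ s), pderiv 1 (f₈₁ s)}) = 1 := by
  refine finrank_quotient_eq_one_of_X_sub_C_mem ![0, -s⁻¹] (fun i => ?_) ?_
  · fin_cases i
    · simpa using X_zero_mem_jacobian_f₈₁ s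
    · simpa using X_one_add_inv_mem_jacobian_f₈₁ hs
  · rw [Ideal.span_le, Set.insert_subset_iff, Set.singleton_subset_iff]
    refine ⟨?_, ?_⟩ <;>
      simp [RingHom.mem_ker, pderiv_zero_f₈₁, pderiv_one_f₈₁, hs]
end
end

section
/- Fix s, t ∈ ℂ and let F = X⁴ + s·Z⁴ + Z³W + Y·W³ − t·W⁴ ∈ ℂ[X,Y,Z,W], the homogenization of the polynomial x⁴ + s·z⁴ + z³ + y of the paper's Example 8.4 with the fibre equation subtracted. Then for every nonzero v = (X,Y,Z,W) ∈ ℂ⁴, the four partial derivatives ∂F/∂X, ∂F/∂Y, ∂F/∂Z, ∂F/∂W all vanish at v if and only if X = Z = W = 0. Hence for all s, t the projective hypersurface {F = 0} ⊂ ℙ³ has exactly one singular point, namely p = [0:1:0:0]. -/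
open MvPolynomial

noncomputable section

/-- F = X⁴ + s·Z⁴ + Z³W + Y·W³ − t·W⁴, the homogenization of x⁴ + sz⁴ + z³ + y of
    Example 8.4 with the fibre equation subtracted
    (variables: X 0 = X, X 1 = Y, X 2 = Z, X 3 = W). -/
def F₈₄ (s t : ℂ) : MvPolynomial (Fin 4) ℂ :=
  X 0 ^ 4 + C s * X 2 ^ 4 + X 2 ^ 3 * X 3 + X 1 * X 3 ^ 3 - C t * X 3 ^ 4

lemma key84 (s t : ℂ) (v : Fin 4 → ℂ) :
    (∀ i : Fin 4, eval v (pderiv i (F₈₄ s t)) = 0) ↔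
      (v 0 = 0 ∧ v 2 = 0 ∧ v 3 = 0) := by
  have h0 : eval v (pderiv 0 (F₈₄ s t)) = 4 * v 0 ^ 3 := by
    simp [F₈₄]
  have h1 : eval v (pderiv 1 (F₈₄ s t)) = v 3 ^ 3 := by
    simp [F₈₄]
  have h2 : eval v (pderiv 2 (F₈₄ s t)) = 4 * s * v 2 ^ 3 + 3 * v 2 ^ 2 * v 3 := by
    simp [F₈₄]; ring
  have h3 : eval v (pderiv 3 (F₈₄ s t)) =
      v 2 ^ 3 + 3 * v 1 * v 3 ^ 2 - 4 * t * v 3 ^ 3 := by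
    simp [F₈₄]; ring
  constructor
  · intro h
    have e0 := h 0; rw [h0] at e0
    have e1 := h 1; rw [h1] at e1
    have e3 := h 3; rw [h3] at e3
    have hv0 : v 0 = 0 := by
      have h : v 0 ^ 3 = 0 := by
        have := mul_eq_zero.mp e0
        simpa using this
      exact pow_eq_zero_iff (n := 3) (by norm_num) |>.mp h
    have hv3 : v 3 = 0 := pow_eq_zero_iff (n := 3) (by norm_num) |>.mp e1
    have hv2 : v 2 = 0 := by
      rw [hv3] at e3
      have : v 2 ^ 3 = 0 := by linear_combination e3
      exact pow_eq_zero_iff (n := 3) (by norm_num) |>.mp this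
    exact ⟨hv0, hv2, hv3⟩
  · rintro ⟨hv0, hv2, hv3⟩ i
    fin_cases i <;> simp_all

/-- for all s, t ∈ ℂ and every nonzero v ∈ ℂ⁴, the four partial
    derivatives of F all vanish at v iff X = Z = W = 0 at v.  Hence the projective
    hypersurface {F = 0} ⊂ ℙ³ has exactly one singular point, namely [0:1:0:0]. -/
theorem singular_points_example84 (s t : ℂ) :
    (∀ v : Fin 4 → ℂ, v ≠ 0 →
      ((∀ i : Fin 4, eval v (pderiv i (F₈₄ s t)) = 0) ↔
        (v 0 = 0 ∧ v 2 = 0 ∧ v 3 = 0))) ∧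
    {p : Projectivization ℂ (Fin 4 → ℂ) |
        ∀ i : Fin 4, eval p.rep (pderiv i (F₈₄ s t)) = 0}
      = {Projectivization.mk ℂ ![0, 1, 0, 0] (fun h => by simpa using congrFun h 1)} := by
  refine ⟨fun v _ => key84 s t v, ?_⟩
  ext p
  simp only [Set.mem_setOf_eq, Set.mem_singleton_iff, key84 s t p.rep]
  have hrep := p.rep_nonzero
  have hw : (![0, 1, 0, 0] : Fin 4 → ℂ) ≠ 0 := fun h => by simpa using congrFun h 1
  constructor
  · rintro ⟨h0, h2, h3⟩
    have h1 : p.rep 1 ≠ 0 := by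
      intro h1
      apply hrep
      funext i; fin_cases i <;> assumption
    rw [← p.mk_rep, Projectivization.mk_eq_mk_iff' ℂ _ _ p.rep_nonzero hw]
    refine ⟨p.rep 1, ?_⟩
    funext i; fin_cases i <;> simp [h0, h2, h3]
  · intro h
    rw [← p.mk_rep, Projectivization.mk_eq_mk_iff' ℂ _ _ p.rep_nonzero hw] at h
    obtain ⟨a, ha⟩ := h
    rw [← ha]
    refine ⟨by simp, by simp, by simp⟩
end
end

section
/- For every t ∈ ℂ, the polynomial g = x⁴ + z³·w + w³ − t·w⁴ ∈ ℂ[x,z,w] has local Milnor number 21 at the origin: dim_ℂ O/J(g)·O = 21, where O = ℂ[x,z,w]_{(x,z,w)} is the localization of ℂ[x,z,w] at the maximal ideal of the origin and J(g) is the ideal generated by the three partial derivatives of g. (This is the singularity of type A₃ ⊕ E₇, with μ = 3·7 = 21, of the compactified fibre 𝕐_{0,t} at the point [0:1:0:0] in the paper's Example 8.4, computed in the affine chart Y = 1.) -/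
open MvPolynomial

noncomputable section

/-- The maximal ideal of the origin in ℂ[x,z,w] (variables: X 0 = x, X 1 = z, X 2 = w),
    realized as the kernel of evaluation at 0. -/
def mOrigin₃ : Ideal (MvPolynomial (Fin 3) ℂ) := RingHom.ker (eval (0 : Fin 3 → ℂ))

instance : mOrigin₃.IsMaximal :=
  RingHom.ker_isMaximal_of_surjective _ (fun r => ⟨C r, by simp⟩)

/-- The local ring O = ℂ[x,z,w]_{(x,z,w)} at the origin. -/
def O₃ : Type := Localization.AtPrime mOrigin₃

/-- g = x⁴ + z³·w + w³ − t·w⁴ (variables: X 0 = x, X 1 = z, X 2 = w). -/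
def g₈₄ (t : ℂ) : MvPolynomial (Fin 3) ℂ :=
  X 0 ^ 4 + X 1 ^ 3 * X 2 + X 2 ^ 3 - C t * X 2 ^ 4


/-!
The partial derivatives of `g₈₄ t` are `4x³`, `3z²w` and `z³ + 3w² - 4tw³`, and
`3w·∂g/∂w - z·∂g/∂z = 3w³(3 - 4tw)`. As `3 - 4tw` is a unit at the origin, `J(g)·O = I·O`
for `I = (x³, z²w, z³ + 3w², w³)`, independently of `t`. Since `I` contains powers of `x`, `z`
and `w`, every polynomial not vanishing at the origin is a unit modulo `I`, so
`O ⧸ I·O ≅ ℂ[x,z,w] ⧸ I`. Rewriting `z³ ↦ -3w²` and discarding multiples of `x³`, `w³`, `z²w`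
gives a normal form modulo `I`, which shows that the `3 · 7 = 21` monomials `x^a z^b w^c` with
`a, b, c < 3` and `c = 0` whenever `b = 2` form a basis of `ℂ[x,z,w] ⧸ I`.
-/

open Finset

theorem MvPolynomial.ker_eval_zero_le_span_range_X {σ R : Type*} [CommSemiring R] :
    RingHom.ker (eval (0 : σ → R)) ≤ Ideal.span (Set.range X) := by
  intro p hp
  rw [← Set.image_univ, mem_ideal_span_X_image]
  intro m hm
  have hm0 : m ≠ 0 := by
    rintro rfl
    exact mem_support_iff.1 hm (by simpa [RingHom.mem_ker, eval_zero, constantCoeff_eq] using hp)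
  obtain ⟨i, hi⟩ := Finsupp.ne_iff.1 hm0
  exact ⟨i, Set.mem_univ i, hi⟩

theorem Ideal.Quotient.isUnit_mk_of_le_radical {R : Type*} [CommRing R] {I 𝔪 : Ideal R}
    [h𝔪 : 𝔪.IsMaximal] (hI : 𝔪 ≤ I.radical) {s : R} (hs : s ∉ 𝔪) :
    IsUnit (Ideal.Quotient.mk I s) := by
  obtain ⟨r, m, hm, hrs⟩ := h𝔪.exists_inv hs
  have hnil : IsNilpotent (Ideal.Quotient.mk I m) := by
    obtain ⟨n, hn⟩ := hI hm
    exact ⟨n, by rwa [← map_pow, Ideal.Quotient.eq_zero_iff_mem]⟩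
  have hunit : IsUnit (Ideal.Quotient.mk I (r * s)) := by
    rw [eq_sub_of_add_eq hrs, map_sub, map_one]
    exact hnil.isUnit_one_sub
  exact isUnit_of_mul_isUnit_right (by rwa [← map_mul])

theorem IsLocalization.finrank_quotient_map_of_isUnit {R S : Type*} [CommRing R] [CommRing S]
    [Algebra R S] (M : Submonoid R) [IsLocalization M S] {I : Ideal R} (k : Type*) [CommSemiring k]
    [Algebra k R] [Algebra k S] [IsScalarTower k R S]
    (h : ∀ m ∈ M, IsUnit (Ideal.Quotient.mk I m)) :
    Module.finrank k (S ⧸ I.map (algebraMap R S)) = Module.finrank k (R ⧸ I) := by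
  -- `S ⧸ I·S` is the localization of `R ⧸ I` at the image of `M`, which consists of units.
  let e : (R ⧸ I) ≃ₐ[R ⧸ I] S ⧸ I.map (algebraMap R S) :=
    IsLocalization.atUnits (R ⧸ I) (Algebra.algebraMapSubmonoid (R ⧸ I) M)
      (by rintro _ ⟨m, hm, rfl⟩; exact h m hm)
  exact ((e.restrictScalars R).restrictScalars k).toLinearEquiv.finrank_eq.symm

theorem MvPolynomial.monomial_one_eq_X_pow_mul_X_pow_mul_X_pow {R : Type*} [CommSemiring R]
    (d : Fin 3 →₀ ℕ) :
    (monomial d 1 : MvPolynomial (Fin 3) R) = X 0 ^ d 0 * X 1 ^ d 1 * X 2 ^ d 2 := by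
  rw [monomial_eq, Finsupp.prod_fintype _ _ (by simp), Fin.prod_univ_three, C_1, one_mul]

theorem MvPolynomial.X_pow_mul_X_pow_mul_X_pow_eq_monomial {R : Type*} [CommSemiring R]
    (a b c : ℕ) :
    (X 0 ^ a * X 1 ^ b * X 2 ^ c : MvPolynomial (Fin 3) R) =
      monomial (Finsupp.single 0 a + Finsupp.single 1 b + Finsupp.single 2 c) 1 := by
  rw [monomial_one_eq_X_pow_mul_X_pow_mul_X_pow]; simp

section NormalForm

variable {R : Type*} [CommRing R]

variable (R) in
/-- The Jacobian ideal of `x⁴ + z³w + w³` (the `A₃ ⊕ E₇` normal form), with `w³` added as a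
generator so that no division by `3` is needed. -/
def modelIdeal : Ideal (MvPolynomial (Fin 3) R) :=
  Ideal.span {X 0 ^ 3, X 1 ^ 2 * X 2, X 1 ^ 3 + 3 * X 2 ^ 2, X 2 ^ 3}

variable (R) in
/-- The remainder of `x^a z^b w^c` modulo `modelIdeal R`. -/
def normalForm (a b c : ℕ) : MvPolynomial (Fin 3) R :=
  if 3 ≤ a ∨ 3 ≤ c ∨ (2 ≤ b ∧ 1 ≤ c) then 0
  else if 3 ≤ b then (-3 : R) • normalForm a (b - 3) (c + 2)
  else X 0 ^ a * X 1 ^ b * X 2 ^ c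
termination_by b

theorem normalForm_eq_zero {a b c : ℕ} (h : 3 ≤ a ∨ 3 ≤ c ∨ (2 ≤ b ∧ 1 ≤ c)) :
    normalForm R a b c = 0 := by
  rw [normalForm, if_pos h]

theorem normalForm_add_three (a b c : ℕ) :
    normalForm R a (b + 3) c = (-3 : R) • normalForm R a b (c + 2) := by
  by_cases h : 3 ≤ a ∨ 1 ≤ c
  · rw [normalForm_eq_zero (by omega), normalForm_eq_zero (by omega), smul_zero]
  · rw [normalForm, if_neg (by omega), if_pos (by omega), Nat.add_sub_cancel]

def stdExponents : Finset (ℕ × ℕ × ℕ) :=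
  {e ∈ range 3 ×ˢ range 3 ×ˢ range 3 | 2 ≤ e.2.1 → e.2.2 = 0}

theorem card_stdExponents : #stdExponents = 21 := by decide

variable (R) in
def stdMonomial (e : stdExponents) : MvPolynomial (Fin 3) R :=
  X 0 ^ e.1.1 * X 1 ^ e.1.2.1 * X 2 ^ e.1.2.2

theorem linearIndependent_stdMonomial : LinearIndependent R (stdMonomial R) := by
  have : stdMonomial R = basisMonomials (Fin 3) R ∘ fun e =>
      Finsupp.single 0 e.1.1 + Finsupp.single 1 e.1.2.1 + Finsupp.single 2 e.1.2.2 := by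
    ext1 e
    simp [stdMonomial, X_pow_mul_X_pow_mul_X_pow_eq_monomial, coe_basisMonomials]
  rw [this]
  refine (basisMonomials _ R).linearIndependent.comp _ fun e e' h => ?_
  have h0 : e.1.1 = e'.1.1 := by simpa using DFunLike.congr_fun h 0
  have h1 : e.1.2.1 = e'.1.2.1 := by simpa using DFunLike.congr_fun h 1
  have h2 : e.1.2.2 = e'.1.2.2 := by simpa using DFunLike.congr_fun h 2
  exact Subtype.ext (Prod.ext h0 (Prod.ext h1 h2))

theorem normalForm_mem_span_stdMonomial (a b c : ℕ) :
    normalForm R a b c ∈ Submodule.span R (Set.range (stdMonomial R)) := by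
  fun_induction normalForm R a b c with
  | case1 => exact zero_mem _
  | case2 b c _ _ ih => exact Submodule.smul_mem _ _ ih
  | case3 b c h hb =>
    have he : (a, b, c) ∈ stdExponents := by
      simp only [stdExponents, mem_filter, mem_product, mem_range]; omega
    exact Submodule.subset_span ⟨⟨_, he⟩, rfl⟩

theorem X_pow_mul_X_pow_mul_X_pow_mem_modelIdeal {a b c : ℕ}
    (h : 3 ≤ a ∨ 3 ≤ c ∨ (2 ≤ b ∧ 1 ≤ c)) :
    X 0 ^ a * X 1 ^ b * X 2 ^ c ∈ modelIdeal R := by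
  rcases h with ha | hc | ⟨hb, hc⟩
  · obtain ⟨a, rfl⟩ := Nat.exists_eq_add_of_le' ha
    rw [show (X 0 ^ (a + 3) * X 1 ^ b * X 2 ^ c : MvPolynomial (Fin 3) R) =
      X 0 ^ a * X 1 ^ b * X 2 ^ c * X 0 ^ 3 by ring]
    exact Ideal.mul_mem_left _ _ (Ideal.subset_span (by simp))
  · obtain ⟨c, rfl⟩ := Nat.exists_eq_add_of_le' hc
    rw [show (X 0 ^ a * X 1 ^ b * X 2 ^ (c + 3) : MvPolynomial (Fin 3) R) =
      X 0 ^ a * X 1 ^ b * X 2 ^ c * X 2 ^ 3 by ring]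
    exact Ideal.mul_mem_left _ _ (Ideal.subset_span (by simp))
  · obtain ⟨b, rfl⟩ := Nat.exists_eq_add_of_le' hb
    obtain ⟨c, rfl⟩ := Nat.exists_eq_add_of_le' hc
    rw [show (X 0 ^ a * X 1 ^ (b + 2) * X 2 ^ (c + 1) : MvPolynomial (Fin 3) R) =
      X 0 ^ a * X 1 ^ b * X 2 ^ c * (X 1 ^ 2 * X 2) by ring]
    exact Ideal.mul_mem_left _ _ (Ideal.subset_span (by simp))

theorem X_pow_mul_X_pow_mul_X_pow_sub_normalForm_mem_modelIdeal (a b c : ℕ) :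
    X 0 ^ a * X 1 ^ b * X 2 ^ c - normalForm R a b c ∈ modelIdeal R := by
  fun_induction normalForm R a b c with
  | case1 b c h => simpa using X_pow_mul_X_pow_mul_X_pow_mem_modelIdeal h
  | case2 b c _ hb ih =>
    obtain ⟨b, rfl⟩ := Nat.exists_eq_add_of_le' hb
    rw [Nat.add_sub_cancel] at ih ⊢
    have hz : X 0 ^ a * X 1 ^ b * X 2 ^ c * (X 1 ^ 3 + 3 * X 2 ^ 2) ∈ modelIdeal R :=
      Ideal.mul_mem_left _ _ (Ideal.subset_span (by simp))
    convert Ideal.add_mem _ hz (Ideal.mul_mem_left _ (-3) ih) using 1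
    rw [smul_eq_C_mul, map_neg, map_ofNat]
    ring
  | case3 => simp

variable (R) in
def normalFormMap : MvPolynomial (Fin 3) R →ₗ[R] MvPolynomial (Fin 3) R :=
  (basisMonomials (Fin 3) R).constr R fun d => normalForm R (d 0) (d 1) (d 2)

theorem normalFormMap_monomial (d : Fin 3 →₀ ℕ) :
    normalFormMap R (monomial d 1) = normalForm R (d 0) (d 1) (d 2) :=
  (basisMonomials _ R).constr_basis R _ d

theorem normalFormMap_X_pow_mul_X_pow_mul_X_pow (a b c : ℕ) :
    normalFormMap R (X 0 ^ a * X 1 ^ b * X 2 ^ c) = normalForm R a b c := by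
  rw [X_pow_mul_X_pow_mul_X_pow_eq_monomial, normalFormMap_monomial]; simp

theorem normalFormMap_mul_eq_zero {g : MvPolynomial (Fin 3) R}
    (hg : g ∈ ({X 0 ^ 3, X 1 ^ 2 * X 2, X 1 ^ 3 + 3 * X 2 ^ 2, X 2 ^ 3} : Set _))
    (p : MvPolynomial (Fin 3) R) : normalFormMap R (p * g) = 0 := by
  suffices normalFormMap R ∘ₗ LinearMap.mulRight R g = 0 from LinearMap.congr_fun this p
  refine (basisMonomials _ R).ext fun d => ?_
  simp only [LinearMap.comp_apply, LinearMap.mulRight_apply, coe_basisMonomials,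
    monomial_one_eq_X_pow_mul_X_pow_mul_X_pow, LinearMap.zero_apply]
  obtain rfl | rfl | rfl | rfl := hg
  · rw [show (X 0 ^ d 0 * X 1 ^ d 1 * X 2 ^ d 2 * X 0 ^ 3 : MvPolynomial (Fin 3) R) =
      X 0 ^ (d 0 + 3) * X 1 ^ d 1 * X 2 ^ d 2 by ring,
      normalFormMap_X_pow_mul_X_pow_mul_X_pow, normalForm_eq_zero (by omega)]
  · rw [show (X 0 ^ d 0 * X 1 ^ d 1 * X 2 ^ d 2 * (X 1 ^ 2 * X 2) : MvPolynomial (Fin 3) R) =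
      X 0 ^ d 0 * X 1 ^ (d 1 + 2) * X 2 ^ (d 2 + 1) by ring,
      normalFormMap_X_pow_mul_X_pow_mul_X_pow, normalForm_eq_zero (by omega)]
  · rw [show (X 0 ^ d 0 * X 1 ^ d 1 * X 2 ^ d 2 * (X 1 ^ 3 + 3 * X 2 ^ 2) :
        MvPolynomial (Fin 3) R) = X 0 ^ d 0 * X 1 ^ (d 1 + 3) * X 2 ^ d 2 +
          (3 : R) • (X 0 ^ d 0 * X 1 ^ d 1 * X 2 ^ (d 2 + 2)) by
        rw [smul_eq_C_mul, map_ofNat]; ring,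
      map_add, map_smul, normalFormMap_X_pow_mul_X_pow_mul_X_pow,
      normalFormMap_X_pow_mul_X_pow_mul_X_pow, normalForm_add_three]
    module
  · rw [show (X 0 ^ d 0 * X 1 ^ d 1 * X 2 ^ d 2 * X 2 ^ 3 : MvPolynomial (Fin 3) R) =
      X 0 ^ d 0 * X 1 ^ d 1 * X 2 ^ (d 2 + 3) by ring,
      normalFormMap_X_pow_mul_X_pow_mul_X_pow, normalForm_eq_zero (by omega)]

theorem normalFormMap_eq_zero_of_mem {x : MvPolynomial (Fin 3) R} (hx : x ∈ modelIdeal R) :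
    normalFormMap R x = 0 := by
  suffices ∀ p, normalFormMap R (p * x) = 0 by simpa using this 1
  induction hx using Submodule.span_induction with
  | mem g hg => exact normalFormMap_mul_eq_zero hg
  | zero => simp
  | add x y _ _ hx hy => intro p; rw [mul_add, map_add, hx, hy, add_zero]
  | smul r y _ hy => intro p; rw [smul_eq_mul, ← mul_assoc]; exact hy _

theorem mkQ_comp_normalFormMap :
    ((modelIdeal R).restrictScalars R).mkQ ∘ₗ normalFormMap R =
      ((modelIdeal R).restrictScalars R).mkQ := by
  refine (basisMonomials _ R).ext fun d => ?_
  simp only [LinearMap.comp_apply, coe_basisMonomials]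
  rw [normalFormMap_monomial, monomial_one_eq_X_pow_mul_X_pow_mul_X_pow, Submodule.mkQ_apply,
    Submodule.mkQ_apply, Submodule.Quotient.eq]
  exact (Submodule.neg_mem_iff _).1
    (by simpa using X_pow_mul_X_pow_mul_X_pow_sub_normalForm_mem_modelIdeal _ _ _)

theorem ker_normalFormMap :
    LinearMap.ker (normalFormMap R) = (modelIdeal R).restrictScalars R := by
  refine le_antisymm (fun x hx => ?_) fun x hx => normalFormMap_eq_zero_of_mem hx
  have := LinearMap.congr_fun (mkQ_comp_normalFormMap (R := R)) x
  rwa [LinearMap.comp_apply, LinearMap.mem_ker.1 hx, map_zero, eq_comm, Submodule.mkQ_apply,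
    Submodule.Quotient.mk_eq_zero] at this

theorem range_normalFormMap :
    LinearMap.range (normalFormMap R) = Submodule.span R (Set.range (stdMonomial R)) := by
  refine le_antisymm ?_ (Submodule.span_le.2 ?_)
  · rw [normalFormMap, Module.Basis.constr_range, Submodule.span_le]
    rintro _ ⟨d, rfl⟩
    exact normalForm_mem_span_stdMonomial _ _ _
  · rintro _ ⟨⟨e, he⟩, rfl⟩
    refine ⟨stdMonomial R ⟨e, he⟩, ?_⟩
    simp only [stdExponents, mem_filter, mem_product, mem_range] at he
    simp only [stdMonomial]
    rw [normalFormMap_X_pow_mul_X_pow_mul_X_pow, normalForm, if_neg (by omega),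
      if_neg (by omega)]

theorem finrank_quotient_modelIdeal [Nontrivial R] :
    Module.finrank R (MvPolynomial (Fin 3) R ⧸ modelIdeal R) = 21 := by
  let e := (Submodule.Quotient.restrictScalarsEquiv R (modelIdeal R)).symm ≪≫ₗ
    Submodule.quotEquivOfEq _ _ ker_normalFormMap.symm ≪≫ₗ
    (normalFormMap R).quotKerEquivRange ≪≫ₗ LinearEquiv.ofEq _ _ range_normalFormMap
  rw [e.finrank_eq, finrank_span_eq_card linearIndependent_stdMonomial, Fintype.card_coe,
    card_stdExponents]

theorem X_mem_radical_modelIdeal (i : Fin 3) :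
    (X i : MvPolynomial (Fin 3) R) ∈ (modelIdeal R).radical := by
  fin_cases i
  · exact ⟨3, Ideal.subset_span (by simp)⟩
  · refine ⟨5, ?_⟩
    change (X 1 ^ 5 : MvPolynomial (Fin 3) R) ∈ _
    rw [show (X 1 ^ 5 : MvPolynomial (Fin 3) R) =
      X 1 ^ 2 * (X 1 ^ 3 + 3 * X 2 ^ 2) - 3 * X 2 * (X 1 ^ 2 * X 2) by ring]
    exact Ideal.sub_mem _ (Ideal.mul_mem_left _ _ (Ideal.subset_span (by simp)))
      (Ideal.mul_mem_left _ _ (Ideal.subset_span (by simp)))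
  · exact ⟨3, Ideal.subset_span (by simp)⟩

end NormalForm

theorem isUnit_mk_modelIdeal_of_notMem {s : MvPolynomial (Fin 3) ℂ} (hs : s ∉ mOrigin₃) :
    IsUnit (Ideal.Quotient.mk (modelIdeal ℂ) s) :=
  Ideal.Quotient.isUnit_mk_of_le_radical (𝔪 := mOrigin₃) (ker_eval_zero_le_span_range_X.trans <|
    Ideal.span_le.2 <| Set.range_subset_iff.2 X_mem_radical_modelIdeal) hs

theorem pderiv_zero_g₈₄ (t : ℂ) : pderiv 0 (g₈₄ t) = 4 * X 0 ^ 3 := by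
  simp [g₈₄]

theorem pderiv_one_g₈₄ (t : ℂ) : pderiv 1 (g₈₄ t) = 3 * X 1 ^ 2 * X 2 := by
  simp [g₈₄]; ring

theorem pderiv_two_g₈₄ (t : ℂ) :
    pderiv 2 (g₈₄ t) = X 1 ^ 3 + 3 * X 2 ^ 2 - 4 * C t * X 2 ^ 3 := by
  simp [g₈₄]; ring

theorem span_pderiv_g₈₄_le_modelIdeal (t : ℂ) :
    Ideal.span {pderiv 0 (g₈₄ t), pderiv 1 (g₈₄ t), pderiv 2 (g₈₄ t)} ≤ modelIdeal ℂ := by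
  rw [Ideal.span_le]
  rintro _ (rfl | rfl | rfl)
  · rw [pderiv_zero_g₈₄]
    exact Ideal.mul_mem_left _ _ (Ideal.subset_span (by simp))
  · rw [pderiv_one_g₈₄, mul_assoc]
    exact Ideal.mul_mem_left _ _ (Ideal.subset_span (by simp))
  · rw [pderiv_two_g₈₄]
    exact Ideal.sub_mem _ (Ideal.subset_span (by simp))
      (Ideal.mul_mem_left _ _ (Ideal.subset_span (by simp)))

theorem map_span_pderiv_g₈₄_eq_map_modelIdeal (t : ℂ) :
    Ideal.map (algebraMap (MvPolynomial (Fin 3) ℂ) (Localization.AtPrime mOrigin₃))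
        (Ideal.span {pderiv 0 (g₈₄ t), pderiv 1 (g₈₄ t), pderiv 2 (g₈₄ t)}) =
      Ideal.map (algebraMap _ (Localization.AtPrime mOrigin₃)) (modelIdeal ℂ) := by
  set J := Ideal.span {pderiv 0 (g₈₄ t), pderiv 1 (g₈₄ t), pderiv 2 (g₈₄ t)}
  have hJ (p q r : MvPolynomial (Fin 3) ℂ) :
      p * pderiv 0 (g₈₄ t) + q * pderiv 1 (g₈₄ t) + r * pderiv 2 (g₈₄ t) ∈ J :=
    add_mem (add_mem (Ideal.mul_mem_left _ _ (Ideal.subset_span (by simp)))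
      (Ideal.mul_mem_left _ _ (Ideal.subset_span (by simp))))
      (Ideal.mul_mem_left _ _ (Ideal.subset_span (by simp)))
  refine le_antisymm (Ideal.map_mono (span_pderiv_g₈₄_le_modelIdeal t)) ?_
  have of_mul_mem (x m : MvPolynomial (Fin 3) ℂ) (hm : eval 0 m ≠ 0) (hx : m * x ∈ J) :
      x ∈ (J.map (algebraMap _ (Localization.AtPrime mOrigin₃))).comap (algebraMap _ _) :=
    (IsLocalization.algebraMap_mem_map_algebraMap_iff mOrigin₃.primeCompl _ _ _).2
      ⟨m, fun h => hm (RingHom.mem_ker.1 h), hx⟩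
  rw [Ideal.map_le_iff_le_comap, modelIdeal, Ideal.span_le]
  rintro _ (rfl | rfl | rfl | rfl)
  · refine of_mul_mem _ 4 (by simp [map_ofNat]) ?_
    convert hJ 1 0 0 using 1
    rw [pderiv_zero_g₈₄]; ring
  · refine of_mul_mem _ 3 (by simp [map_ofNat]) ?_
    convert hJ 0 1 0 using 1
    rw [pderiv_one_g₈₄]; ring
  · refine of_mul_mem _ (3 * (3 - 4 * C t * X 2)) (by simp [map_ofNat]) ?_
    convert hJ 0 (-4 * C t * X 1) 9 using 1
    rw [pderiv_one_g₈₄, pderiv_two_g₈₄]; ring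
  · refine of_mul_mem _ (3 * (3 - 4 * C t * X 2)) (by simp [map_ofNat]) ?_
    convert hJ 0 (-X 1) (3 * X 2) using 1
    rw [pderiv_one_g₈₄, pderiv_two_g₈₄]; ring

/-- for every t ∈ ℂ, g = x⁴ + z³w + w³ − tw⁴ has local Milnor number 21
    at the origin: dim_ℂ O/J(g)·O = 21 (the A₃ ⊕ E₇ singularity of Example 8.4). -/
theorem local_milnor_number_example84_s0 (t : ℂ) :
    Module.finrank ℂ
      (Localization.AtPrime mOrigin₃ ⧸
        Ideal.map (algebraMap (MvPolynomial (Fin 3) ℂ) (Localization.AtPrime mOrigin₃))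
          (Ideal.span {pderiv 0 (g₈₄ t), pderiv 1 (g₈₄ t), pderiv 2 (g₈₄ t)})) = 21 := by
  rw [map_span_pderiv_g₈₄_eq_map_modelIdeal,
    IsLocalization.finrank_quotient_map_of_isUnit mOrigin₃.primeCompl ℂ
      fun _ => isUnit_mk_modelIdeal_of_notMem]
  exact finrank_quotient_modelIdeal
end
end
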